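/- In a parallel system, if p_i ≤ p_j then for every concave loss l* : [0,1] → ℝ the global value of information satisfies VoI_G(i) ≥ VoI_G(j); in particular, the component with the lowest marginal failure probability (the most reliable component) maximizes VoI_G, regardless of the interdependence among components' states and of the adopted concave loss function. -/

import Mathlib

open scoped Classical

/-- Probability of an event `E` under weights `w` on a finite outcome space. -/
noncomputable def Pr {Ω : Type*} [Fintype Ω] (w : Ω → ℝ) (E : Ω → Prop) : ℝ :=
  ∑ ω ∈ Finset.univ.filter E, w ω

/-- Conditional probability `P[A | B]`. -/
noncomputable def cPr {Ω : Type*} [Fintype Ω] (w : Ω → ℝ) (A B : Ω → Prop) : ℝ :=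
  Pr w (fun ω => A ω ∧ B ω) / Pr w B

/-- Posterior expected loss of inspecting a component with binary inspection outcome `y`
(`y = false` is an alarm), where `F` is the system-failure event and `l` the optimal
expected loss as a function of the system failure probability. -/
noncomputable def postLoss {Ω : Type*} [Fintype Ω] (w : Ω → ℝ) (F : Ω → Prop)
    (y : Ω → Bool) (l : ℝ → ℝ) : ℝ :=
  Pr w (fun ω => y ω = false) * l (cPr w F (fun ω => y ω = false))
    + (1 - Pr w (fun ω => y ω = false)) * l (cPr w F (fun ω => y ω = true))

/-- Global value of information of inspecting a component with inspection outcome `y`. -/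
noncomputable def VoIG {Ω : Type*} [Fintype Ω] (w : Ω → ℝ) (F : Ω → Prop)
    (y : Ω → Bool) (l : ℝ → ℝ) : ℝ :=
  l (Pr w F) - postLoss w F y l

/-!
Given any joint state, an inspection of component `k` alarms with probability `εFA` or
`1 - εFS` according to the state of `k` alone, so `P[alarm_k] = εFA + K p_k` grows with `p_k`.
In a parallel system, failure forces every component to be failed, so
`P[F ∧ alarm_k] = (1 - εFS) q` and `P[F ∧ no alarm_k] = εFS q`, with `q = P[F]`, do not depend on
`k`. The two posteriors `(1 - εFS) q / h_k` and `εFS q / (1 - h_k)` average to `q` and both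
move towards `q` as `h_k` grows: inspecting a less reliable component gives a mean-preserving
contraction of the posterior, whose expected concave loss is larger.
-/

open Set

section Pr

variable {Ω : Type*} [Fintype Ω] {w : Ω → ℝ}

lemma Pr_eq_sum_ite (E : Ω → Prop) : Pr w E = ∑ ω, if E ω then w ω else 0 :=
  Finset.sum_filter _ _

lemma Pr_nonneg (hw0 : ∀ ω, 0 ≤ w ω) (E : Ω → Prop) : 0 ≤ Pr w E :=
  Finset.sum_nonneg fun ω _ => hw0 ω

lemma Pr_congr {E E' : Ω → Prop} (h : ∀ ω, E ω ↔ E' ω) : Pr w E = Pr w E' := by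
  simp only [Pr, h]

lemma Pr_mono (hw0 : ∀ ω, 0 ≤ w ω) {E E' : Ω → Prop} (h : ∀ ω, E ω → E' ω) :
    Pr w E ≤ Pr w E' :=
  Finset.sum_le_sum_of_subset_of_nonneg (Finset.monotone_filter_right _ fun ω _ => h ω)
    fun ω _ _ => hw0 ω

lemma Pr_le_one (hw0 : ∀ ω, 0 ≤ w ω) (hw1 : ∑ ω, w ω = 1) (E : Ω → Prop) : Pr w E ≤ 1 :=
  hw1 ▸ Finset.sum_le_univ_sum_of_nonneg hw0

lemma Pr_eq_zero {E : Ω → Prop} (h : ∀ ω, ¬ E ω) : Pr w E = 0 := by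
  simp [Pr, h]

lemma Pr_and_add_Pr_and_not (A B : Ω → Prop) :
    Pr w (fun ω => A ω ∧ B ω) + Pr w (fun ω => A ω ∧ ¬ B ω) = Pr w A := by
  simp only [Pr_eq_sum_ite, ← Finset.sum_add_distrib]
  congr! 1 with ω
  by_cases A ω <;> by_cases B ω <;> simp [*]

lemma Pr_not (hw1 : ∑ ω, w ω = 1) (B : Ω → Prop) :
    Pr w (fun ω => ¬ B ω) = 1 - Pr w B := by
  have h := Pr_and_add_Pr_and_not (w := w) (fun _ => True) B
  simp only [true_and] at h
  rw [show Pr w (fun _ => True) = 1 by simpa [Pr] using hw1] at h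
  linarith

lemma Pr_eq_sum_Pr_and_eq {α : Type*} [Fintype α] (X : Ω → α) (A : Ω → Prop) :
    Pr w A = ∑ a, Pr w (fun ω => A ω ∧ X ω = a) := by
  simp only [Pr_eq_sum_ite]
  rw [Finset.sum_comm]
  congr! 1 with ω
  by_cases A ω <;> simp [*]

lemma Pr_and_eq_mul_of_cPr_eq (hw0 : ∀ ω, 0 ≤ w ω) {A B : Ω → Prop} {c : ℝ}
    (h : 0 < Pr w B → cPr w A B = c) : Pr w (fun ω => A ω ∧ B ω) = c * Pr w B := by
  rcases (Pr_nonneg hw0 B).lt_or_eq with hB | hB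
  · rw [← h hB, cPr, div_mul_cancel₀ _ hB.ne']
  · rw [← hB, mul_zero]
    exact le_antisymm (hB ▸ Pr_mono hw0 fun ω hω => hω.2) (Pr_nonneg hw0 _)

lemma Pr_and_eq_mul_of_forall_cPr_eq (hw0 : ∀ ω, 0 ≤ w ω) {α : Type*} [Fintype α]
    (X : Ω → α) (S : α → Prop) (A : Ω → Prop) {c : ℝ}
    (h : ∀ a, S a → 0 < Pr w (fun ω => X ω = a) → cPr w A (fun ω => X ω = a) = c) :
    Pr w (fun ω => S (X ω) ∧ A ω) = c * Pr w (fun ω => S (X ω)) := by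
  rw [Pr_eq_sum_Pr_and_eq X, Pr_eq_sum_Pr_and_eq X, Finset.mul_sum]
  refine Finset.sum_congr rfl fun a _ => ?_
  by_cases ha : S a
  · calc Pr w (fun ω => (S (X ω) ∧ A ω) ∧ X ω = a)
        = Pr w (fun ω => A ω ∧ X ω = a) := Pr_congr fun ω => by grind
      _ = c * Pr w (fun ω => X ω = a) := Pr_and_eq_mul_of_cPr_eq hw0 (h a ha)
      _ = c * Pr w (fun ω => S (X ω) ∧ X ω = a) := by
        congr 1; exact Pr_congr fun ω => by grind
  · rw [Pr_eq_zero fun ω (h : (S (X ω) ∧ A ω) ∧ X ω = a) => ha (h.2 ▸ h.1.1),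
      Pr_eq_zero fun ω (h : S (X ω) ∧ X ω = a) => ha (h.2 ▸ h.1), mul_zero]

end Pr

lemma ConcaveOn.chord_le {s : Set ℝ} {f : ℝ → ℝ} (hf : ConcaveOn ℝ s f) {a b x : ℝ}
    (ha : a ∈ s) (hb : b ∈ s) (hba : b < a) (hx : x ∈ Icc b a) :
    f b + (x - b) / (a - b) * (f a - f b) ≤ f x := by
  set t := (x - b) / (a - b)
  have ht0 : 0 ≤ t := div_nonneg (by linarith [hx.1]) (by linarith)
  have ht1 : t ≤ 1 := (div_le_one (by linarith)).2 (by linarith [hx.2])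
  have hxt : (1 - t) • b + t • a = x := by
    have : t * (a - b) = x - b := div_mul_cancel₀ _ (by linarith)
    simp only [smul_eq_mul]
    linear_combination this
  have := hf.2 hb ha (show (0 : ℝ) ≤ 1 - t by linarith) ht0 (by ring)
  rw [hxt, smul_eq_mul, smul_eq_mul] at this
  linarith

/-- Both sides are compared through the chord of `f` over `[b, a]`: it is affine, agrees with
`f` at `a` and `b`, and lies below `f` on `[b, a]`. -/
lemma ConcaveOn.two_point_le_of_mean_eq {s : Set ℝ} {f : ℝ → ℝ} (hf : ConcaveOn ℝ s f)
    {a b x y t u : ℝ} (ha : a ∈ s) (hb : b ∈ s) (hx : x ∈ Icc b a) (hy : y ∈ Icc b a)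
    (hu : u ∈ Icc (0 : ℝ) 1) (hmean : t * a + (1 - t) * b = u * x + (1 - u) * y) :
    t * f a + (1 - t) * f b ≤ u * f x + (1 - u) * f y := by
  rcases (hx.1.trans hx.2).lt_or_eq with hba | hba
  · set chord := fun z => f b + (z - b) / (a - b) * (f a - f b)
    have hchord : ∀ v p q, v * chord p + (1 - v) * chord q = chord (v * p + (1 - v) * q) :=
      fun v p q => by simp only [chord]; ring
    have hab : a - b ≠ 0 := by linarith
    calc t * f a + (1 - t) * f b = t * chord a + (1 - t) * chord b := by
          simp only [chord]; field_simp; ring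
      _ = u * chord x + (1 - u) * chord y := by rw [hchord, hchord, hmean]
      _ ≤ u * f x + (1 - u) * f y := by
          gcongr
          · exact hu.1
          · exact hf.chord_le ha hb hba hx
          · linarith [hu.2]
          · exact hf.chord_le ha hb hba hy
  · have hxa : x = a := le_antisymm hx.2 (hba ▸ hx.1)
    have hya : y = a := le_antisymm hy.2 (hba ▸ hy.1)
    have hconst : ∀ v : ℝ, v * f a + (1 - v) * f a = f a := fun v => by ring
    rw [hxa, hya, hba, hconst, hconst]

/-- `h f(α/h) + (1-h) f(β/(1-h))` is the expected posterior loss of a binary signal with alarm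
probability `h`, where `α` and `β` are the joint probabilities of the target event with an alarm
and with no alarm; the posteriors `α/h'`, `β/(1-h')` lie between `β/(1-h)` and `α/h`. -/
lemma ConcaveOn.posterior_loss_mono {f : ℝ → ℝ} (hf : ConcaveOn ℝ (Icc 0 1) f)
    {α β h h' : ℝ} (hα : 0 ≤ α) (hβ : 0 ≤ β) (h0 : 0 < h) (hαh : α ≤ h) (hh : h ≤ h')
    (h'1 : h' < 1) (hβα : β * h' ≤ α * (1 - h')) :
    h * f (α / h) + (1 - h) * f (β / (1 - h))
      ≤ h' * f (α / h') + (1 - h') * f (β / (1 - h')) := by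
  have h'0 : 0 < h' := h0.trans_le hh
  have h1 : 0 < 1 - h := by linarith
  have h'1' : 0 < 1 - h' := by linarith
  have hyx : β / (1 - h') ≤ α / h' := by rwa [div_le_div_iff₀ h'1' h'0]
  have hxa : α / h' ≤ α / h := div_le_div_of_nonneg_left hα h0 hh
  have hby : β / (1 - h) ≤ β / (1 - h') := div_le_div_of_nonneg_left hβ h'1' (by linarith)
  have ha1 : α / h ≤ 1 := (div_le_one h0).2 hαh
  have hb0 : 0 ≤ β / (1 - h) := div_nonneg hβ h1.le
  refine hf.two_point_le_of_mean_eq ⟨hb0.trans (hby.trans (hyx.trans hxa)), ha1⟩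
    ⟨hb0, hby.trans (hyx.trans (hxa.trans ha1))⟩ ⟨hby.trans hyx, hxa⟩ ⟨hby, hyx.trans hxa⟩
    ⟨h'0.le, h'1.le⟩ ?_
  field_simp

section Inspection

variable {Ω ι : Type*} [Fintype Ω] [Fintype ι] {w : Ω → ℝ} {s : Ω → ι → Bool}
  {y : ι → Ω → Bool} {εFA εFS : ℝ}

/-- `y k = false` is an alarm on component `k`: given any joint state of all the components,
a false alarm has probability `εFA` and a missed failure probability `εFS`. -/
def HasErrorRates (w : Ω → ℝ) (s : Ω → ι → Bool) (y : ι → Ω → Bool) (εFA εFS : ℝ) : Prop :=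
  ∀ k σ, 0 < Pr w (fun ω => s ω = σ) →
    cPr w (fun ω => y k ω = false) (fun ω => s ω = σ) = if σ k = true then εFA else 1 - εFS

namespace HasErrorRates

lemma Pr_and_alarm (hw0 : ∀ ω, 0 ≤ w ω) (he : HasErrorRates w s y εFA εFS) (k : ι)
    {S : (ι → Bool) → Prop} {b : Bool} (hS : ∀ σ, S σ → σ k = b) :
    Pr w (fun ω => S (s ω) ∧ y k ω = false)
      = (if b = true then εFA else 1 - εFS) * Pr w (fun ω => S (s ω)) :=
  Pr_and_eq_mul_of_forall_cPr_eq hw0 s S _ fun σ hσ hpos => by rw [he k σ hpos, hS σ hσ]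

lemma Pr_alarm (hw0 : ∀ ω, 0 ≤ w ω) (hw1 : ∑ ω, w ω = 1) (he : HasErrorRates w s y εFA εFS)
    (k : ι) :
    Pr w (fun ω => y k ω = false)
      = εFA + (1 - εFA - εFS) * Pr w (fun ω => s ω k = false) := by
  have hfailed := he.Pr_and_alarm hw0 k (S := fun σ => σ k = false) fun _ => id
  have hworking := he.Pr_and_alarm hw0 k (S := fun σ => ¬ σ k = false) (b := true)
    fun _ => Bool.not_eq_false _ |>.mp
  rw [Pr_not hw1] at hworking
  rw [← Pr_and_add_Pr_and_not _ fun ω => s ω k = false, Pr_congr fun _ => and_comm,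
    hfailed, Pr_congr fun _ => and_comm, hworking]
  simp only [Bool.false_eq_true, if_false, if_true]
  ring

lemma cPr_alarm (hw0 : ∀ ω, 0 ≤ w ω) (he : HasErrorRates w s y εFA εFS) (k : ι)
    {S : (ι → Bool) → Prop} (hS : ∀ σ, S σ → σ k = false) :
    cPr w (fun ω => S (s ω)) (fun ω => y k ω = false)
      = (1 - εFS) * Pr w (fun ω => S (s ω)) / Pr w (fun ω => y k ω = false) := by
  rw [cPr, he.Pr_and_alarm hw0 k hS, if_neg Bool.false_ne_true]

lemma cPr_no_alarm (hw0 : ∀ ω, 0 ≤ w ω) (hw1 : ∑ ω, w ω = 1)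
    (he : HasErrorRates w s y εFA εFS) (k : ι) {S : (ι → Bool) → Prop}
    (hS : ∀ σ, S σ → σ k = false) :
    cPr w (fun ω => S (s ω)) (fun ω => y k ω = true)
      = εFS * Pr w (fun ω => S (s ω)) / (1 - Pr w (fun ω => y k ω = false)) := by
  have hsplit := Pr_and_add_Pr_and_not (w := w) (fun ω => S (s ω)) fun ω => y k ω = false
  rw [he.Pr_and_alarm hw0 k hS, if_neg Bool.false_ne_true] at hsplit
  simp only [Bool.not_eq_false] at hsplit
  rw [cPr, ← Pr_not hw1]
  simp only [Bool.not_eq_false]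
  congr 1
  linarith

end HasErrorRates

end Inspection

theorem parallel_global_prefers_most_reliable_general {Ω : Type*} [Fintype Ω] {N : ℕ} (w : Ω → ℝ)
    (hw0 : ∀ ω, 0 ≤ w ω) (hw1 : ∑ ω, w ω = 1)
    (s : Ω → Fin N → Bool) (y : Fin N → Ω → Bool)
    (εFA εFS : ℝ) (hFA0 : 0 ≤ εFA) (hFA : εFA < 1/2) (hFS0 : 0 ≤ εFS) (hFS : εFS < 1/2)
    (hemit : ∀ (k : Fin N) (σ : Fin N → Bool), 0 < Pr w (fun ω => s ω = σ) →
      cPr w (fun ω => y k ω = false) (fun ω => s ω = σ)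
        = if σ k = true then εFA else 1 - εFS)
    (i j : Fin N)
    (hi0 : 0 < Pr w (fun ω => y i ω = false))
    (hj1 : Pr w (fun ω => y j ω = false) < 1)
    (hpij : Pr w (fun ω => s ω i = false) ≤ Pr w (fun ω => s ω j = false))
    (l : ℝ → ℝ) (hl : ConcaveOn ℝ (Set.Icc (0:ℝ) 1) l) :
    VoIG w (fun ω => ∀ k, s ω k = false) (y j) l
      ≤ VoIG w (fun ω => ∀ k, s ω k = false) (y i) l := by
  have he : HasErrorRates w s y εFA εFS := hemit
  have hF : ∀ k (σ : Fin N → Bool), (∀ m, σ m = false) → σ k = false := fun k _ hσ => hσ k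
  rw [VoIG, VoIG, postLoss, postLoss, he.cPr_alarm hw0 i (hF i), he.cPr_alarm hw0 j (hF j),
    he.cPr_no_alarm hw0 hw1 i (hF i), he.cPr_no_alarm hw0 hw1 j (hF j)]
  rw [he.Pr_alarm hw0 hw1 i] at hi0 ⊢
  rw [he.Pr_alarm hw0 hw1 j] at hj1 ⊢
  set q := Pr w fun ω => ∀ k, s ω k = false
  set p_i := Pr w fun ω => s ω i = false
  set p_j := Pr w fun ω => s ω j = false
  have hq0 : 0 ≤ q := Pr_nonneg hw0 _
  have hqi : q ≤ p_i := Pr_mono hw0 fun ω hω => hω i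
  have hpj1 : p_j ≤ 1 := Pr_le_one hw0 hw1 _
  have hK : 0 ≤ 1 - εFA - εFS := by linarith
  refine sub_le_sub_left (hl.posterior_loss_mono (mul_nonneg (by linarith) hq0)
    (mul_nonneg hFS0 hq0) hi0 ?_ ?_ hj1 ?_) _
  · nlinarith [mul_nonneg hFA0 (sub_nonneg.2 (hqi.trans (hpij.trans hpj1)))]
  · nlinarith [mul_le_mul_of_nonneg_left hpij hK]
  · nlinarith [mul_nonneg hq0 (mul_nonneg hK (sub_nonneg.2 hpj1))]

/-- In a parallel system (the system fails iff every component fails), with the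
same inspection error rates for all components, if `p_i ≤ p_j` then for every concave loss
`l*` the global value of information satisfies `VoI_G(i) ≥ VoI_G(j)`: the most reliable
component maximizes `VoI_G`, regardless of the interdependence among components' states and
of the adopted concave loss function. -/
theorem parallel_global_prefers_most_reliable {Ω : Type*} [Fintype Ω] {N : ℕ} (w : Ω → ℝ)
    (hw0 : ∀ ω, 0 ≤ w ω) (hw1 : ∑ ω, w ω = 1)
    (s : Ω → Fin N → Bool) (y : Fin N → Ω → Bool)
    (εFA εFS : ℝ) (hFA0 : 0 ≤ εFA) (hFA : εFA < 1/2) (hFS0 : 0 ≤ εFS) (hFS : εFS < 1/2)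
    (hemit : ∀ (k : Fin N) (σ : Fin N → Bool), 0 < Pr w (fun ω => s ω = σ) →
      cPr w (fun ω => y k ω = false) (fun ω => s ω = σ)
        = if σ k = true then εFA else 1 - εFS)
    (i j : Fin N)
    (hi0 : 0 < Pr w (fun ω => y i ω = false)) (hi1 : Pr w (fun ω => y i ω = false) < 1)
    (hj0 : 0 < Pr w (fun ω => y j ω = false)) (hj1 : Pr w (fun ω => y j ω = false) < 1)
    (hpij : Pr w (fun ω => s ω i = false) ≤ Pr w (fun ω => s ω j = false))
    (l : ℝ → ℝ) (hl : ConcaveOn ℝ (Set.Icc (0:ℝ) 1) l) :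
    VoIG w (fun ω => ∀ k, s ω k = false) (y j) l
      ≤ VoIG w (fun ω => ∀ k, s ω k = false) (y i) l :=
  parallel_global_prefers_most_reliable_general w hw0 hw1 s y εFA εFS hFA0 hFA hFS0 hFS hemit i j
    hi0 hj1 hpij l hl
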